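/- Let $0 < \alpha < 1$, $p = n/(n+\alpha)$, and let $a$ be an integrable function supported in the cube $Q = Q(x_0, r)$ with $\int a = 0$ and $\int_Q |a(y)|\,dy \le |Q| \cdot w(Q)^{-1/p}$. Then for every $x \notin 2\sqrt{n}\, Q$, the intrinsic Littlewood–Paley $g$-function satisfies $g_\alpha(a)(x) \le C \cdot \frac{r^{n+\alpha}}{w(Q)^{1/p}} \cdot \frac{1}{|x - x_0|^{n+\alpha}}$, with $C$ depending only on $n$ and $\alpha$. -/

import Mathlib

open MeasureTheory Set Metric ENNReal

noncomputable section

/-- The axis-parallel cube centered at `x0` with side length `r`. -/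
def cube (n : ℕ) (x0 : EuclideanSpace ℝ (Fin n)) (r : ℝ) : Set (EuclideanSpace ℝ (Fin n)) :=
  {x | ∀ i, |x i - x0 i| ≤ r / 2}

/-- The weighted measure `w(E) = ∫_E w`. -/
def wm (n : ℕ) (w : EuclideanSpace ℝ (Fin n) → ℝ) (s : Set (EuclideanSpace ℝ (Fin n))) : ℝ≥0∞ :=
  ∫⁻ x in s, ENNReal.ofReal (w x)

/-- The intrinsic Hölder class 𝒞_α. -/
def holderClass (n : ℕ) (α : ℝ) : Set (EuclideanSpace ℝ (Fin n) → ℝ) :=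
  {φ | Function.support φ ⊆ closedBall 0 1 ∧ (∫ x, φ x = 0) ∧
    ∀ x x', |φ x - φ x'| ≤ ‖x - x'‖ ^ α}

/-- `f * φ_t (x)` where `φ_t(x) = t^{-n} φ(x/t)`. -/
def convDil (n : ℕ) (f φ : EuclideanSpace ℝ (Fin n) → ℝ) (t : ℝ) (x : EuclideanSpace ℝ (Fin n)) : ℝ :=
  ∫ y, f y * ((t ^ n)⁻¹ * φ (t⁻¹ • (x - y)))

/-- `A_α(f)(y,t) = sup_{φ ∈ 𝒞_α} |f * φ_t(y)|`. -/
def intA (n : ℕ) (α : ℝ) (f : EuclideanSpace ℝ (Fin n) → ℝ) (y : EuclideanSpace ℝ (Fin n)) (t : ℝ) : ℝ≥0∞ :=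
  ⨆ φ ∈ holderClass n α, ENNReal.ofReal |convDil n f φ t y|

/-- The intrinsic Littlewood–Paley g-function. -/
def gFun (n : ℕ) (α : ℝ) (f : EuclideanSpace ℝ (Fin n) → ℝ) (x : EuclideanSpace ℝ (Fin n)) : ℝ≥0∞ :=
  (∫⁻ t in Ioi (0 : ℝ), (intA n α f x t) ^ 2 * (ENNReal.ofReal t)⁻¹) ^ (1/2 : ℝ)

/-- The varying-aperture intrinsic square function `S_{α,β}`. -/
def sFun (n : ℕ) (α β : ℝ) (f : EuclideanSpace ℝ (Fin n) → ℝ) (x : EuclideanSpace ℝ (Fin n)) : ℝ≥0∞ :=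
  (∫⁻ t in Ioi (0 : ℝ), ∫⁻ y in ball x (β * t),
      (intA n α f y t) ^ 2 * (ENNReal.ofReal (t ^ (n + 1)))⁻¹) ^ (1/2 : ℝ)

/-- The intrinsic `g^*_λ` function. -/
def gStar (n : ℕ) (α lam : ℝ) (f : EuclideanSpace ℝ (Fin n) → ℝ) (x : EuclideanSpace ℝ (Fin n)) : ℝ≥0∞ :=
  (∫⁻ t in Ioi (0 : ℝ), ∫⁻ y,
      (ENNReal.ofReal (t / (t + ‖x - y‖))) ^ (lam * n) *
        (intA n α f y t) ^ 2 * (ENNReal.ofReal (t ^ (n + 1)))⁻¹) ^ (1/2 : ℝ)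

/-- The `A_1` condition with constant `A`. -/
def isA1 (n : ℕ) (w : EuclideanSpace ℝ (Fin n) → ℝ) (A : ℝ) : Prop :=
  ∀ (x0 : EuclideanSpace ℝ (Fin n)) (r : ℝ), 0 < r →
    (∫ x in cube n x0 r, w x) ≤ A * r ^ n * essInf w (volume.restrict (cube n x0 r))

/-- The `A_q` condition, `q > 1`, with constant `A`. -/
def isAq (n : ℕ) (w : EuclideanSpace ℝ (Fin n) → ℝ) (q A : ℝ) : Prop :=
  ∀ (x0 : EuclideanSpace ℝ (Fin n)) (r : ℝ), 0 < r →
    ((r ^ n)⁻¹ * ∫ x in cube n x0 r, w x) *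
      ((r ^ n)⁻¹ * ∫ x in cube n x0 r, (w x) ^ (-(1 / (q - 1)) : ℝ)) ^ (q - 1) ≤ A

end

/-! If `a` lives in the ball `B(x₀, ρ)` with `ρ = √n r / 2` and `|x - x₀| > 2ρ`, the kernels
`φ_t(x - ·)` with `t ≤ |x - x₀| / 2` miss the support of `a`, so `A_α(a)(x, t) = 0` there. For larger
`t`, the vanishing mean of `a` lets us subtract `φ_t(x - x₀)`, and the Hölder bound on `φ` gives
`A_α(a)(x, t) ≤ ρ^α ‖a‖₁ t^{-(n+α)}`. Integrating `t^{-2(n+α)} dt/t` over `t > |x - x₀| / 2` yields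
`g_α(a)(x) ≲ ρ^α ‖a‖₁ |x - x₀|^{-(n+α)}`, and the size condition turns `‖a‖₁` into
`r^n w(Q)^{-1/p}`. -/

lemma EuclideanSpace.norm_le_sqrt_card_mul {n : ℕ} {z : EuclideanSpace ℝ (Fin n)} {c : ℝ}
    (hc : 0 ≤ c) (h : ∀ i, |z i| ≤ c) : ‖z‖ ≤ √n * c := by
  have hsum : ∑ i, ‖z i‖ ^ 2 ≤ n * c ^ 2 := by
    calc ∑ i, ‖z i‖ ^ 2 ≤ ∑ _i : Fin n, c ^ 2 :=
          Finset.sum_le_sum fun i _ => pow_le_pow_left₀ (norm_nonneg _) (h i) 2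
      _ = n * c ^ 2 := by simp
  calc ‖z‖ = √(∑ i, ‖z i‖ ^ 2) := EuclideanSpace.norm_eq z
    _ ≤ √(n * c ^ 2) := Real.sqrt_le_sqrt hsum
    _ = √n * c := by rw [Real.sqrt_mul n.cast_nonneg, Real.sqrt_sq hc]

lemma cube_subset_closedBall (n : ℕ) (x0 : EuclideanSpace ℝ (Fin n)) {r : ℝ} (hr : 0 ≤ r) :
    cube n x0 r ⊆ closedBall x0 (√n * (r / 2)) := fun y hy =>
  mem_closedBall_iff_norm.2 <| EuclideanSpace.norm_le_sqrt_card_mul (by positivity) hy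

lemma half_lt_norm_sub_of_notMem_cube {n : ℕ} {x x0 : EuclideanSpace ℝ (Fin n)} {s : ℝ}
    (hx : x ∉ cube n x0 s) : s / 2 < ‖x - x0‖ := by
  obtain ⟨i, hi⟩ := not_forall.1 hx
  calc s / 2 < |x i - x0 i| := not_le.1 hi
    _ = ‖(x - x0) i‖ := rfl
    _ ≤ ‖x - x0‖ := PiLp.norm_apply_le _ i

section HolderClass

variable {n : ℕ} {α : ℝ} {φ : EuclideanSpace ℝ (Fin n) → ℝ}

lemma continuous_of_mem_holderClass (hα : 0 < α) (hφ : φ ∈ holderClass n α) :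
    Continuous φ := by
  refine continuous_iff_continuousAt.2 fun x => tendsto_iff_norm_sub_tendsto_zero.2 ?_
  have hcont : Continuous fun y => ‖y - x‖ ^ α :=
    (continuous_id.sub continuous_const).norm.rpow_const fun _ => Or.inr hα.le
  have hlim : Filter.Tendsto (fun y => ‖y - x‖ ^ α) (nhds x) (nhds 0) := by
    simpa [Real.zero_rpow hα.ne'] using hcont.tendsto x
  exact squeeze_zero (fun _ => norm_nonneg _) (fun y => hφ.2.2 y x) hlim

lemma hasCompactSupport_of_mem_holderClass (hφ : φ ∈ holderClass n α) : HasCompactSupport φ :=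
  HasCompactSupport.intro (isCompact_closedBall 0 1) fun _ hv =>
    Function.notMem_support.1 fun h => hv (hφ.1 h)

lemma eq_zero_of_mem_holderClass_of_one_lt_norm (hφ : φ ∈ holderClass n α)
    {v : EuclideanSpace ℝ (Fin n)} (hv : 1 < ‖v‖) : φ v = 0 :=
  Function.notMem_support.1 fun h => (mem_closedBall_zero_iff.1 (hφ.1 h)).not_gt hv

end HolderClass

lemma abs_integral_mul_le_of_integral_eq_zero {X : Type*} [MeasurableSpace X] {μ : Measure X}
    {f ψ : X → ℝ} (hf : Integrable f μ) (hfψ : Integrable (fun y => f y * ψ y) μ)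
    (hf0 : ∫ y, f y ∂μ = 0) (c M : ℝ) (hM : ∀ y, f y ≠ 0 → |ψ y - c| ≤ M) :
    |∫ y, f y * ψ y ∂μ| ≤ M * ∫ y, |f y| ∂μ := by
  have hshift : ∫ y, f y * ψ y ∂μ = ∫ y, f y * (ψ y - c) ∂μ := by
    simp_rw [mul_sub]
    rw [integral_sub hfψ (hf.mul_const c), integral_mul_const, hf0, zero_mul, sub_zero]
  rw [hshift, ← integral_const_mul, ← Real.norm_eq_abs]
  refine norm_integral_le_of_norm_le (hf.abs.const_mul M) (Filter.Eventually.of_forall fun y => ?_)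
  by_cases hy : f y = 0
  · simp [hy]
  rw [norm_mul, Real.norm_eq_abs, Real.norm_eq_abs, mul_comm M]
  exact mul_le_mul_of_nonneg_left (hM y hy) (abs_nonneg _)

section Convolution

variable {n : ℕ} {α : ℝ} {f φ : EuclideanSpace ℝ (Fin n) → ℝ} {t : ℝ}
  {x x0 : EuclideanSpace ℝ (Fin n)}

lemma convDil_eq_zero_of_lt_norm_sub (hφ : φ ∈ holderClass n α) (ht : 0 < t)
    (hfar : ∀ y, f y ≠ 0 → t < ‖x - y‖) : convDil n f φ t x = 0 := by
  have hvanish : ∀ y, f y * ((t ^ n)⁻¹ * φ (t⁻¹ • (x - y))) = 0 := fun y => by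
    by_cases hy : f y = 0
    · simp [hy]
    rw [eq_zero_of_mem_holderClass_of_one_lt_norm hφ, mul_zero, mul_zero]
    rw [norm_smul, norm_inv, Real.norm_of_nonneg ht.le, inv_mul_eq_div, one_lt_div ht]
    exact hfar y hy
  simp [convDil, hvanish]

lemma abs_convDil_le (hα : 0 < α) (hφ : φ ∈ holderClass n α) (hf : Integrable f)
    (hf0 : ∫ y, f y = 0) {ρ : ℝ} (hsupp : ∀ y, f y ≠ 0 → ‖y - x0‖ ≤ ρ) (ht : 0 < t) :
    |convDil n f φ t x| ≤ (t ^ n)⁻¹ * (ρ / t) ^ α * ∫ y, |f y| := by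
  set ψ : EuclideanSpace ℝ (Fin n) → ℝ := fun y => (t ^ n)⁻¹ * φ (t⁻¹ • (x - y))
  have hφc := continuous_of_mem_holderClass hα hφ
  obtain ⟨B, hB⟩ := hφc.bounded_above_of_compact_support (hasCompactSupport_of_mem_holderClass hφ)
  have hψc : Continuous ψ := continuous_const.mul (hφc.comp (by fun_prop))
  have hψB : ∀ y, ‖ψ y‖ ≤ (t ^ n)⁻¹ * B := fun y => by
    rw [norm_mul, Real.norm_of_nonneg (by positivity)]
    gcongr
    exact hB _
  have hfψ : Integrable (fun y => f y * ψ y) :=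
    hf.mul_bdd hψc.aestronglyMeasurable (Filter.Eventually.of_forall hψB)
  refine abs_integral_mul_le_of_integral_eq_zero hf hfψ hf0 (ψ x0) _ fun y hy => ?_
  calc |ψ y - ψ x0| = (t ^ n)⁻¹ * |φ (t⁻¹ • (x - y)) - φ (t⁻¹ • (x - x0))| := by
        rw [← mul_sub, abs_mul, abs_of_pos (by positivity)]
    _ ≤ (t ^ n)⁻¹ * ‖t⁻¹ • (x - y) - t⁻¹ • (x - x0)‖ ^ α := by
        gcongr
        exact hφ.2.2 _ _
    _ = (t ^ n)⁻¹ * (‖y - x0‖ / t) ^ α := by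
        rw [← smul_sub, sub_sub_sub_cancel_left y x0 x, norm_smul, norm_inv, Real.norm_of_nonneg ht.le,
          norm_sub_rev, inv_mul_eq_div t]
    _ ≤ (t ^ n)⁻¹ * (ρ / t) ^ α := by
        gcongr
        exact hsupp y hy

lemma intA_eq_zero_of_lt_norm_sub (ht : 0 < t) (hfar : ∀ y, f y ≠ 0 → t < ‖x - y‖) :
    intA n α f x t = 0 :=
  le_antisymm (iSup₂_le fun _ hφ => by simp [convDil_eq_zero_of_lt_norm_sub hφ ht hfar]) zero_le

lemma intA_le (hα : 0 < α) (hf : Integrable f) (hf0 : ∫ y, f y = 0) {ρ : ℝ} (hρ : 0 ≤ ρ)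
    (hsupp : ∀ y, f y ≠ 0 → ‖y - x0‖ ≤ ρ) (ht : 0 < t) :
    intA n α f x t ≤ ENNReal.ofReal (ρ ^ α * (∫ y, |f y|) * t ^ (-(n + α))) := by
  refine iSup₂_le fun φ hφ => ofReal_le_ofReal <| (abs_convDil_le hα hφ hf hf0 hsupp ht).trans_eq ?_
  rw [Real.div_rpow hρ ht.le, Real.rpow_neg ht.le, Real.rpow_add ht, Real.rpow_natCast]
  field_simp

end Convolution

lemma lintegral_Ioi_rpow_of_lt {a c : ℝ} (ha : a < -1) (hc : 0 < c) :
    ∫⁻ t in Ioi c, ENNReal.ofReal (t ^ a) = ENNReal.ofReal (-c ^ (a + 1) / (a + 1)) := by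
  rw [← ofReal_integral_eq_lintegral_ofReal (integrableOn_Ioi_rpow_of_lt ha hc)
    (ae_restrict_of_forall_mem measurableSet_Ioi fun t ht => Real.rpow_nonneg (hc.trans ht).le a),
    integral_Ioi_rpow_of_lt ha hc]

lemma lintegral_Ioi_sq_mul_inv_le {F : ℝ → ℝ≥0∞} {K T m : ℝ} (hK : 0 ≤ K) (hT : 0 < T)
    (hm : 0 < m) (hzero : ∀ t ∈ Ioc 0 T, F t = 0)
    (hdecay : ∀ t, 0 < t → F t ≤ ENNReal.ofReal (K * t ^ (-m))) :
    ∫⁻ t in Ioi 0, F t ^ 2 * (ENNReal.ofReal t)⁻¹ ≤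
      ENNReal.ofReal (K ^ 2 * (T ^ (-(2 * m)) / (2 * m))) := by
  have hnear : ∫⁻ t in Ioc 0 T, F t ^ 2 * (ENNReal.ofReal t)⁻¹ = 0 :=
    (setLIntegral_congr_fun measurableSet_Ioc fun t ht => by simp [hzero t ht]).trans
      lintegral_zero
  have hpoint : ∀ t ∈ Ioi T,
      F t ^ 2 * (ENNReal.ofReal t)⁻¹ ≤ ENNReal.ofReal (K ^ 2) * ENNReal.ofReal (t ^ (-(2 * m) - 1)) := by
    intro t ht
    have ht0 : 0 < t := hT.trans ht
    calc F t ^ 2 * (ENNReal.ofReal t)⁻¹ ≤ ENNReal.ofReal (K * t ^ (-m)) ^ 2 * (ENNReal.ofReal t)⁻¹ := by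
          gcongr
          exact hdecay t ht0
      _ = ENNReal.ofReal (K ^ 2) * ENNReal.ofReal (t ^ (-(2 * m) - 1)) := by
          rw [← ofReal_pow (by positivity), ← ofReal_inv_of_pos ht0, ← ofReal_mul (by positivity),
            ← ofReal_mul (by positivity), Real.rpow_sub ht0, Real.rpow_one,
            show -(2 * m) = -m * 2 by ring, Real.rpow_mul ht0.le, Real.rpow_two]
          ring_nf
  rw [← Ioc_union_Ioi_eq_Ioi hT.le, lintegral_union measurableSet_Ioi (Ioc_disjoint_Ioi le_rfl),
    hnear, zero_add]
  calc ∫⁻ t in Ioi T, F t ^ 2 * (ENNReal.ofReal t)⁻¹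
      ≤ ∫⁻ t in Ioi T, ENNReal.ofReal (K ^ 2) * ENNReal.ofReal (t ^ (-(2 * m) - 1)) :=
        setLIntegral_mono' measurableSet_Ioi hpoint
    _ = ENNReal.ofReal (K ^ 2 * (T ^ (-(2 * m)) / (2 * m))) := by
        rw [lintegral_const_mul _ (by fun_prop), lintegral_Ioi_rpow_of_lt (by linarith) hT,
          ← ofReal_mul (by positivity), sub_add_cancel, neg_div_neg_eq]

theorem gFun_le_of_integral_eq_zero {n : ℕ} {α : ℝ} (hα : 0 < α)
    {f : EuclideanSpace ℝ (Fin n) → ℝ} (hf : Integrable f) (hf0 : ∫ y, f y = 0)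
    {x0 : EuclideanSpace ℝ (Fin n)} {ρ : ℝ} (hρ : 0 ≤ ρ) (hsupp : ∀ y, f y ≠ 0 → ‖y - x0‖ ≤ ρ)
    {x : EuclideanSpace ℝ (Fin n)} (hx : 2 * ρ < ‖x - x0‖) :
    gFun n α f x ≤ ENNReal.ofReal (2 ^ (n + α) / √(2 * (n + α)) * ρ ^ α * (∫ y, |f y|) /
      ‖x - x0‖ ^ (n + α)) := by
  set m : ℝ := n + α
  set D := ‖x - x0‖
  have hm : 0 < m := by positivity
  have hD : 0 < D := by linarith
  have hfar : ∀ t ∈ Ioc 0 (D / 2), ∀ y, f y ≠ 0 → t < ‖x - y‖ := fun t ht y hy => by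
    linarith [ht.2, hsupp y hy, norm_sub_le_norm_sub_add_norm_sub x y x0]
  have hI := lintegral_Ioi_sq_mul_inv_le (F := intA n α f x) (by positivity) (half_pos hD) hm
    (fun t ht => intA_eq_zero_of_lt_norm_sub ht.1 (hfar t ht))
    (fun t ht => intA_le hα hf hf0 hρ hsupp ht)
  have hsq : (ρ ^ α * ∫ y, |f y|) ^ 2 * ((D / 2) ^ (-(2 * m)) / (2 * m)) =
      (2 ^ m / √(2 * m) * ρ ^ α * (∫ y, |f y|) / D ^ m) ^ 2 := by
    rw [show -(2 * m) = -m * 2 by ring, Real.rpow_mul (by positivity), Real.rpow_two,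
      Real.rpow_neg (by positivity), Real.div_rpow hD.le zero_le_two, inv_div]
    field_simp
    rw [Real.sq_sqrt (by positivity)]
    ring
  calc gFun n α f x
      ≤ ENNReal.ofReal ((ρ ^ α * ∫ y, |f y|) ^ 2 * ((D / 2) ^ (-(2 * m)) / (2 * m))) ^ (1 / 2 : ℝ) :=
        ENNReal.rpow_le_rpow hI (by norm_num)
    _ = ENNReal.ofReal (2 ^ m / √(2 * m) * ρ ^ α * (∫ y, |f y|) / D ^ m) := by
        rw [ofReal_rpow_of_nonneg (by positivity) (by norm_num), hsq, ← Real.sqrt_eq_rpow,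
          Real.sqrt_sq (by positivity)]

theorem gFun_atom_decay_general (n : ℕ) (hn : 1 ≤ n) (α : ℝ) (hα0 : 0 < α)
    (p : ℝ)
    (w : EuclideanSpace ℝ (Fin n) → ℝ) :
    ∃ C > 0, ∀ (a : EuclideanSpace ℝ (Fin n) → ℝ) (x0 : EuclideanSpace ℝ (Fin n)) (r : ℝ)
      (x : EuclideanSpace ℝ (Fin n)),
      0 < r →
      MeasureTheory.Integrable a volume →
      Function.support a ⊆ cube n x0 r →
      (∫ y, a y) = 0 →
      0 < (∫ y in cube n x0 r, w y) →
      (∫ y in cube n x0 r, |a y|) ≤ r ^ n * (∫ y in cube n x0 r, w y) ^ (-(1 / p)) →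
      x ∉ cube n x0 (2 * Real.sqrt n * r) →
      gFun n α a x ≤
        ENNReal.ofReal (C * r ^ ((n : ℝ) + α) /
          ((∫ y in cube n x0 r, w y) ^ (1 / p) * ‖x - x0‖ ^ ((n : ℝ) + α))) := by
  have hsqrt : 0 < √n := Real.sqrt_pos.2 (by exact_mod_cast hn)
  refine ⟨2 ^ (n + α) / √(2 * (n + α)) * (√n / 2) ^ α,
    mul_pos (by positivity) (Real.rpow_pos_of_pos (by positivity) α), ?_⟩
  intro a x0 r x hr ha hsupp hzero hW hsize hx
  have hsupp_ball : ∀ y, a y ≠ 0 → ‖y - x0‖ ≤ √n / 2 * r := fun y hy =>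
    (mem_closedBall_iff_norm.1 (cube_subset_closedBall n x0 hr.le (hsupp hy))).trans_eq (by ring)
  have hx_far : 2 * (√n / 2 * r) < ‖x - x0‖ := by
    linarith [half_lt_norm_sub_of_notMem_cube hx]
  have hL : ∫ y, |a y| ≤ r ^ n * ((∫ y in cube n x0 r, w y) ^ (1 / p))⁻¹ := by
    rw [← Real.rpow_neg hW.le, ← setIntegral_eq_integral_of_forall_compl_eq_zero fun y hy => by
      simp [Function.notMem_support.1 fun h => hy (hsupp h)]]
    exact hsize
  refine (gFun_le_of_integral_eq_zero hα0 ha hzero (by positivity) hsupp_ball hx_far).trans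
    (ofReal_le_ofReal ?_)
  rw [Real.mul_rpow (by positivity) hr.le, Real.rpow_add hr, Real.rpow_natCast]
  calc 2 ^ (n + α) / √(2 * (n + α)) * ((√n / 2) ^ α * r ^ α) * (∫ y, |a y|) / ‖x - x0‖ ^ (n + α)
      ≤ 2 ^ (n + α) / √(2 * (n + α)) * ((√n / 2) ^ α * r ^ α) *
          (r ^ n * ((∫ y in cube n x0 r, w y) ^ (1 / p))⁻¹) / ‖x - x0‖ ^ (n + α) := by
        gcongr
    _ = _ := by ring

/-- Decay of the intrinsic g-function of an atom outside the expanded cube. -/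
theorem gFun_atom_decay (n : ℕ) (hn : 1 ≤ n) (α : ℝ) (hα0 : 0 < α) (hα1 : α < 1)
    (p : ℝ) (hpdef : p = n / (n + α))
    (w : EuclideanSpace ℝ (Fin n) → ℝ) (hw : ∀ x, 0 ≤ w x)
    (hloc : MeasureTheory.LocallyIntegrable w volume) :
    ∃ C > 0, ∀ (a : EuclideanSpace ℝ (Fin n) → ℝ) (x0 : EuclideanSpace ℝ (Fin n)) (r : ℝ)
      (x : EuclideanSpace ℝ (Fin n)),
      0 < r →
      MeasureTheory.Integrable a volume →
      Function.support a ⊆ cube n x0 r →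
      (∫ y, a y) = 0 →
      0 < (∫ y in cube n x0 r, w y) →
      (∫ y in cube n x0 r, |a y|) ≤ r ^ n * (∫ y in cube n x0 r, w y) ^ (-(1 / p)) →
      x ∉ cube n x0 (2 * Real.sqrt n * r) →
      gFun n α a x ≤
        ENNReal.ofReal (C * r ^ ((n : ℝ) + α) /
          ((∫ y in cube n x0 r, w y) ^ (1 / p) * ‖x - x0‖ ^ ((n : ℝ) + α))) :=
  gFun_atom_decay_general n hn α hα0 p w
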